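/- Suppose the mixture of k spherical Gaussians satisfies ‖μ_i* − μ_j*‖ ≥ C (σ_i* ∨ σ_j*) · c √(log(ρ_σ/π_min)) for all i ≠ j, where C is a universal constant with C² ≥ 4096 and c > 2 is a given constant. Then for each q ∈ {0, 1, 2}, ρ_π Σ_{j≠1} (R_{j1}*)^q exp(−(R_{j1}*)²/(128 c (σ_1* ∨ σ_j*)²)) ≤ c_q (σ_1*)^q π_min, where c_0, c_1, c_2 are absolute constants that can be made arbitrarily small by choosing C large enough. -/

import Mathlib

open MeasureTheory Real
open scoped BigOperators ENNReal ProbabilityTheory RealInnerProductSpace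

/-- The spherical Gaussian measure `N(μ, σ² I_d)` on `ℝ^d`, given by its density
with respect to Lebesgue measure. -/
noncomputable def sphericalGaussian (d : ℕ) (μ : EuclideanSpace ℝ (Fin d)) (σ : ℝ) :
    Measure (EuclideanSpace ℝ (Fin d)) :=
  volume.withDensity fun x =>
    ENNReal.ofReal ((2 * Real.pi * σ ^ 2) ^ (-(d : ℝ) / 2) *
      Real.exp (-‖x - μ‖ ^ 2 / (2 * σ ^ 2)))

/-- The mixture of `k` spherical Gaussians with mixing weights `p`, means `μ`
and scale factors `σ`. -/
noncomputable def mixture (d k : ℕ) (p : Fin k → ℝ)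
    (μ : Fin k → EuclideanSpace ℝ (Fin d)) (σ : Fin k → ℝ) :
    Measure (EuclideanSpace ℝ (Fin d)) :=
  ∑ j : Fin k, ENNReal.ofReal (p j) • sphericalGaussian d (μ j) (σ j)

/-- The EM E-step weight `w_i(x)` for parameters `(p, μ, v)`, where `v i` is the
*variance* (i.e. `σ_i²`) of the `i`-th component. -/
noncomputable def emWeight (d k : ℕ) (p : Fin k → ℝ)
    (μ : Fin k → EuclideanSpace ℝ (Fin d)) (v : Fin k → ℝ) (i : Fin k)
    (x : EuclideanSpace ℝ (Fin d)) : ℝ :=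
  p i * Real.exp (-‖x - μ i‖ ^ 2 / (2 * v i) - (d : ℝ) * Real.log (v i) / 2) /
    ∑ j : Fin k, p j * Real.exp (-‖x - μ j‖ ^ 2 / (2 * v j) - (d : ℝ) * Real.log (v j) / 2)

/-- Maximum of finitely many reals (as an indexed supremum). -/
noncomputable def finSup {k : ℕ} (f : Fin k → ℝ) : ℝ := ⨆ i, f i

/-- Minimum of finitely many reals (as an indexed infimum). -/
noncomputable def finInf {k : ℕ} (f : Fin k → ℝ) : ℝ := ⨅ i, f i

/-! Write `L = log (ρ_σ / π_min) ≥ log 2` and split the Gaussian factor `exp (-R²/(128 c s²))`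
into two equal halves. One half absorbs the weight `R^q` at the cost of `(1 + 256 c) s^q`. With
`C = 64 √(1 + 257/c_q)`, the separation `R ≥ C c s √L` bounds the other half by
`exp (-16 (1 + 257/c_q) c L) ≤ exp (-3L - c - 257/c_q)`. Here `e^{-c}` pays for `1 + 256 c`,
`e^{-257/c_q} ≤ c_q/257` turns the remaining `257` into `c_q`, and `e^{-3L} = (π_min/ρ_σ)³` pays
for `ρ_π ≤ 1/π_min`, for the `k - 1 ≤ 1/π_min` summands and for `s^q ≤ ρ_σ² σ_1^q`. -/

lemma pow_le_one_add_sq {u : ℝ} {q : ℕ} (hu : 0 ≤ u) (hq : q ≤ 2) : u ^ q ≤ 1 + u ^ 2 := by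
  rcases le_total u 1 with h | h
  · linarith [pow_le_one₀ (n := q) hu h, sq_nonneg u]
  · linarith [pow_le_pow_right₀ h hq]

lemma exp_neg_le_inv {y : ℝ} (hy : 0 < y) : exp (-y) ≤ y⁻¹ := by
  rw [exp_neg]
  exact inv_anti₀ hy (by linarith [add_one_le_exp y])

lemma mul_exp_neg_le_one (y : ℝ) : y * exp (-y) ≤ 1 :=
  (mul_exp_neg_le_exp_neg_one y).trans (exp_le_one_iff.2 (by norm_num))

lemma pow_mul_exp_neg_sq_div_le {u b : ℝ} {q : ℕ} (hu : 0 ≤ u) (hb : 0 < b) (hq : q ≤ 2) :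
    u ^ q * exp (-u ^ 2 / b) ≤ (1 + 2 * b) * exp (-(u ^ 2 / (2 * b))) := by
  set w := u ^ 2 / (2 * b)
  have hu2 : u ^ 2 = 2 * b * w := by simp only [w]; field_simp
  have hsplit : exp (-u ^ 2 / b) = exp (-w) * exp (-w) := by
    rw [← exp_add, hu2]; congr 1; field_simp; ring
  have hexp : exp (-w) ≤ 1 := exp_le_one_iff.2 (neg_nonpos.2 (by positivity))
  calc u ^ q * exp (-u ^ 2 / b) ≤ (1 + 2 * b * w) * exp (-w) * exp (-w) := by
        rw [hsplit, ← hu2, ← mul_assoc]; gcongr; exact pow_le_one_add_sq hu hq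
    _ ≤ (1 + 2 * b) * exp (-w) := by
        gcongr
        nlinarith [mul_exp_neg_le_one w]

lemma pow_mul_exp_neg_sq_div_sq_le {R s b : ℝ} {q : ℕ} (hR : 0 ≤ R) (hs : 0 < s) (hb : 0 < b)
    (hq : q ≤ 2) :
    R ^ q * exp (-R ^ 2 / (b * s ^ 2)) ≤
      s ^ q * (1 + 2 * b) * exp (-(R ^ 2 / (2 * b * s ^ 2))) := by
  have h := pow_mul_exp_neg_sq_div_le (div_nonneg hR hs.le) hb hq
  have hexp : -(R / s) ^ 2 / b = -R ^ 2 / (b * s ^ 2) := by field_simp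
  have hexp' : (R / s) ^ 2 / (2 * b) = R ^ 2 / (2 * b * s ^ 2) := by field_simp
  rw [hexp, hexp'] at h
  calc R ^ q * exp (-R ^ 2 / (b * s ^ 2))
      = s ^ q * ((R / s) ^ q * exp (-R ^ 2 / (b * s ^ 2))) := by rw [div_pow]; field_simp
    _ ≤ s ^ q * ((1 + 2 * b) * exp (-(R ^ 2 / (2 * b * s ^ 2)))) := by gcongr
    _ = _ := by ring

noncomputable def separationConstant (cq : ℝ) : ℝ := 64 * √(1 + 257 / cq)

lemma separationConstant_nonneg (cq : ℝ) : 0 ≤ separationConstant cq := by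
  unfold separationConstant; positivity

lemma sq_separationConstant {cq : ℝ} (hcq : 0 < cq) :
    separationConstant cq ^ 2 = 4096 * (1 + 257 / cq) := by
  rw [separationConstant, mul_pow, Real.sq_sqrt (by positivity)]; norm_num

lemma le_sq_separationConstant {cq : ℝ} (hcq : 0 < cq) : 4096 ≤ separationConstant cq ^ 2 := by
  rw [sq_separationConstant hcq]
  nlinarith [div_pos (by norm_num : (0:ℝ) < 257) hcq]

lemma pow_mul_exp_neg_sq_le_of_separated {cq c L s R : ℝ} {q : ℕ} (hcq : 0 < cq) (hc : 1 ≤ c)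
    (hL : 1 / 2 ≤ L) (hs : 0 < s) (hq : q ≤ 2)
    (hR : separationConstant cq * s * (c * √L) ≤ R) :
    R ^ q * exp (-R ^ 2 / (128 * c * s ^ 2)) ≤ cq * s ^ q * exp (-(3 * L)) := by
  set g := 257 / cq
  have hg : 0 < g := by positivity
  have hC := separationConstant_nonneg cq
  have hR0 : 0 ≤ R := le_trans (by positivity) hR
  have hR2 : 4096 * (1 + g) * c ^ 2 * s ^ 2 * L ≤ R ^ 2 := by
    have h := pow_le_pow_left₀ (by positivity) hR 2
    rwa [mul_pow, mul_pow, mul_pow, Real.sq_sqrt (by linarith), sq_separationConstant hcq,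
      show 4096 * (1 + g) * s ^ 2 * (c ^ 2 * L) = 4096 * (1 + g) * c ^ 2 * s ^ 2 * L by ring] at h
  have hmargin : 3 * L + c + g ≤ 16 * (1 + g) * c * L := by
    nlinarith [mul_nonneg (sub_nonneg.2 hL) (by linarith : (0:ℝ) ≤ 16 * c - 3),
      mul_nonneg hg.le (by nlinarith : (0:ℝ) ≤ 16 * c * L - 1)]
  have hexponent : 3 * L + c + g ≤ R ^ 2 / (2 * (128 * c) * s ^ 2) := by
    rw [le_div_iff₀ (by positivity)]
    nlinarith [mul_le_mul_of_nonneg_right hmargin (by positivity : (0:ℝ) ≤ 256 * c * s ^ 2)]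
  have hc_exp : (1 + 256 * c) * exp (-c) ≤ 257 := by
    nlinarith [mul_exp_neg_le_one c, exp_pos (-c)]
  calc R ^ q * exp (-R ^ 2 / (128 * c * s ^ 2))
      ≤ s ^ q * (1 + 2 * (128 * c)) * exp (-(R ^ 2 / (2 * (128 * c) * s ^ 2))) :=
        pow_mul_exp_neg_sq_div_sq_le hR0 hs (by positivity) hq
    _ ≤ s ^ q * (1 + 256 * c) * exp (-(3 * L + c + g)) := by
        rw [show 1 + 2 * (128 * c) = 1 + 256 * c by ring]
        gcongr
    _ = s ^ q * ((1 + 256 * c) * exp (-c)) * exp (-g) * exp (-(3 * L)) := by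
        rw [show -(3 * L + c + g) = -c + -g + -(3 * L) by ring, exp_add, exp_add]; ring
    _ ≤ s ^ q * 257 * g⁻¹ * exp (-(3 * L)) := by
        gcongr
        exact exp_neg_le_inv hg
    _ = cq * s ^ q * exp (-(3 * L)) := by
        simp only [g]; field_simp

lemma pow_mul_exp_neg_sq_le_of_separated_log {cq c p ρ σ s R : ℝ} {q : ℕ} (hcq : 0 < cq)
    (hc : 1 ≤ c) (hp : 0 < p) (hρ : 1 ≤ ρ) (hL : 1 / 2 ≤ log (ρ / p)) (hσ : 0 < σ) (hs : s ≤ ρ * σ)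
    (hs₀ : 0 < s) (hq : q ≤ 2)
    (hR : separationConstant cq * s * (c * √(log (ρ / p))) ≤ R) :
    R ^ q * exp (-R ^ 2 / (128 * c * s ^ 2)) ≤ cq * σ ^ q * p ^ 3 := by
  have hexpL : exp (-(3 * log (ρ / p))) = (p / ρ) ^ 3 := by
    rw [show -(3 * log (ρ / p)) = ((3 : ℕ) : ℝ) * log (ρ / p)⁻¹ by
      rw [log_inv]; push_cast; ring, ← log_pow, exp_log (by positivity), inv_div]
  have hρq : ρ ^ q / ρ ^ 3 ≤ 1 :=
    (div_le_one (by positivity)).2 (pow_le_pow_right₀ hρ (by omega))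
  calc R ^ q * exp (-R ^ 2 / (128 * c * s ^ 2)) ≤ cq * s ^ q * exp (-(3 * log (ρ / p))) :=
        pow_mul_exp_neg_sq_le_of_separated hcq hc hL hs₀ hq hR
    _ ≤ cq * (ρ * σ) ^ q * (p / ρ) ^ 3 := by
        rw [hexpL]; gcongr
    _ = cq * σ ^ q * p ^ 3 * (ρ ^ q / ρ ^ 3) := by
        field_simp; ring
    _ ≤ cq * σ ^ q * p ^ 3 := mul_le_of_le_one_right (by positivity) hρq

section FinSupInf

variable {k : ℕ} {f : Fin k → ℝ}

lemma finInf_le (f : Fin k → ℝ) (i : Fin k) : finInf f ≤ f i :=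
  ciInf_le (Finite.bddBelow_range f) i

lemma le_finSup (f : Fin k → ℝ) (i : Fin k) : f i ≤ finSup f :=
  le_ciSup (Finite.bddAbove_range f) i

lemma finInf_pos [Nonempty (Fin k)] (hf : ∀ i, 0 < f i) : 0 < finInf f := by
  obtain ⟨i, hi⟩ := Finite.exists_min f
  exact (hf i).trans_le (le_ciInf hi)

lemma finSup_le_sum [Nonempty (Fin k)] (hf : ∀ i, 0 ≤ f i) : finSup f ≤ ∑ i, f i :=
  ciSup_le fun i => Finset.single_le_sum (fun j _ => hf j) (Finset.mem_univ i)

lemma card_mul_finInf_le_sum : k * finInf f ≤ ∑ i, f i := by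
  simpa using Finset.sum_le_sum fun i (_ : i ∈ Finset.univ) => finInf_le f i

lemma one_le_finSup_div_finInf [Nonempty (Fin k)] (hf : ∀ i, 0 < f i) :
    1 ≤ finSup f / finInf f := by
  obtain ⟨i⟩ := ‹Nonempty (Fin k)›
  rw [one_le_div (finInf_pos hf)]
  exact (finInf_le f i).trans (le_finSup f i)

lemma max_le_finSup_div_finInf_mul [Nonempty (Fin k)] (hf : ∀ i, 0 < f i) (i j : Fin k) :
    max (f i) (f j) ≤ finSup f / finInf f * f i := by
  have hinf := finInf_pos hf
  calc max (f i) (f j) ≤ finSup f := max_le (le_finSup f i) (le_finSup f j)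
    _ = finSup f / finInf f * finInf f := by field_simp
    _ ≤ finSup f / finInf f * f i := by
        gcongr
        · exact div_nonneg ((hf i).le.trans (le_finSup f i)) hinf.le
        · exact finInf_le f i

lemma finSup_div_finInf_le_inv [Nonempty (Fin k)] (hf : ∀ i, 0 < f i) (hsum : ∑ i, f i = 1) :
    finSup f / finInf f ≤ (finInf f)⁻¹ := by
  rw [div_eq_mul_inv]
  exact mul_le_of_le_one_left (inv_nonneg.2 (finInf_pos hf).le)
    (hsum ▸ finSup_le_sum fun i => (hf i).le)

lemma two_le_div_finInf_of_one_le {ρ : ℝ} (hk : 2 ≤ k) (hf : ∀ i, 0 < f i)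
    (hsum : ∑ i, f i = 1) (hρ : 1 ≤ ρ) : 2 ≤ ρ / finInf f := by
  have : Nonempty (Fin k) := ⟨⟨0, by omega⟩⟩
  have h2k : (2 : ℝ) ≤ k := by exact_mod_cast hk
  rw [le_div_iff₀ (finInf_pos hf)]
  nlinarith [hsum ▸ card_mul_finInf_le_sum (f := f), finInf_pos hf]

end FinSupInf

/-- **Lemma: finite-sample summed weight-error bounds.**
Under the separation `‖μ_i* − μ_j*‖ ≥ C (σ_i* ∨ σ_j*) · c √(log(ρ_σ/π_min))` for all
`i ≠ j` (with a universal constant `C` with `C² ≥ 4096` and any given `c > 2`),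
for each `q ∈ {0,1,2}` we have
`ρ_π Σ_{j≠1} (R_{j1}*)^q exp(−(R_{j1}*)²/(128 c (σ_1* ∨ σ_j*)²)) ≤ c_q (σ_1*)^q π_min`,
where the constants `c_q` can be made arbitrarily small by taking `C` large enough. -/
theorem finite_sample_sum_weight_error_bounds (cq : ℝ) (hcq : 0 < cq) :
    ∃ C : ℝ, 4096 ≤ C ^ 2 ∧
    ∀ c : ℝ, 2 < c →
    ∀ (d k : ℕ), 1 ≤ d → 2 ≤ k →
    ∀ (ps : Fin k → ℝ) (μs : Fin k → EuclideanSpace ℝ (Fin d)) (σs : Fin k → ℝ),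
    (∀ i, 0 < ps i) → (∑ i, ps i = 1) → (∀ i, 0 < σs i) →
    (∀ i j, i ≠ j →
      C * max (σs i) (σs j) *
          (c * Real.sqrt (Real.log ((finSup σs / finInf σs) / finInf ps)))
        ≤ ‖μs i - μs j‖) →
    ∀ one : Fin k, (one : ℕ) = 0 →
    ∀ q ∈ ({0, 1, 2} : Finset ℕ),
      (finSup ps / finInf ps) *
          ∑ j ∈ Finset.univ.erase one,
            ‖μs j - μs one‖ ^ q *
              Real.exp (-‖μs j - μs one‖ ^ 2 / (128 * c * max (σs one) (σs j) ^ 2))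
        ≤ cq * σs one ^ q * finInf ps := by
  refine ⟨separationConstant cq, le_sq_separationConstant hcq, ?_⟩
  intro c hc d k _ hk ps μs σs hps hsum hσs hsep one _ q hq
  have : Nonempty (Fin k) := ⟨one⟩
  have hπ : 0 < finInf ps := finInf_pos hps
  have hρ := one_le_finSup_div_finInf hσs
  have hq2 : q ≤ 2 := by simp only [Finset.mem_insert, Finset.mem_singleton] at hq; omega
  have hL : 1 / 2 ≤ log (finSup σs / finInf σs / finInf ps) := by
    linarith [log_le_log two_pos (two_le_div_finInf_of_one_le hk hps hsum hρ), log_two_gt_d9]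
  have hterm : ∀ j ∈ Finset.univ.erase one,
      ‖μs j - μs one‖ ^ q * exp (-‖μs j - μs one‖ ^ 2 / (128 * c * max (σs one) (σs j) ^ 2))
        ≤ cq * σs one ^ q * finInf ps ^ 3 := fun j hj =>
    pow_mul_exp_neg_sq_le_of_separated_log hcq (by linarith) hπ hρ hL (hσs one)
      (max_le_finSup_div_finInf_mul hσs one j) (lt_max_of_lt_left (hσs one)) hq2
      (max_comm (σs j) (σs one) ▸ hsep j one (Finset.ne_of_mem_erase hj))
  have hcard : ((Finset.univ.erase one).card : ℝ) ≤ k := by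
    exact_mod_cast (Finset.card_le_univ _).trans_eq (Fintype.card_fin k)
  have hσ : 0 < σs one := hσs one
  calc _ ≤ (finInf ps)⁻¹ * (k * (cq * σs one ^ q * finInf ps ^ 3)) := by
        refine mul_le_mul (finSup_div_finInf_le_inv hps hsum) ?_
          (Finset.sum_nonneg fun j _ => by positivity) (by positivity)
        refine (Finset.sum_le_card_nsmul _ _ _ hterm).trans ?_
        rw [nsmul_eq_mul]
        exact mul_le_mul_of_nonneg_right hcard (by positivity)
    _ = cq * σs one ^ q * finInf ps * (k * finInf ps) := by field_simp
    _ ≤ cq * σs one ^ q * finInf ps :=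
        mul_le_of_le_one_right (by positivity) (hsum ▸ card_mul_finInf_le_sum)
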